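/- Under Assumption 1, for every s ∈ X_c^0 = 𝒫 and u ∈ U_c = 𝒱: if F(s,{u}) is not a subset of 𝒳, then Out ∈ δ_c(s,u). -/

import Mathlib

open Set Function

/-- `ℝⁿ` modeled as `Fin n → ℝ`. -/
abbrev Vec (n : ℕ) : Type := Fin n → ℝ

/-- Projection `π_{I'}` of a dependent tuple onto the components with indices in `I'`. -/
def proj {ι : Type*} (E : ι → Type*) (I' : Set ι) (x : (i : ι) → E i) : (i : I') → E i.1 :=
  fun i => x i.1

/-- `P` is a finite partition of `A`: finitely many nonempty pairwise disjoint cells covering `A`. -/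
def IsFinPartition {α : Type*} (P : Set (Set α)) (A : Set α) : Prop :=
  P.Finite ∧ (∀ s ∈ P, s.Nonempty) ∧ ⋃₀ P = A ∧
    ∀ s ∈ P, ∀ t ∈ P, s ≠ t → Disjoint s t

/-- The family `A : τ → Set α` is a partition of the index type `α`. -/
def IsIndexPartition {τ α : Type*} (A : τ → Set α) : Prop :=
  (⋃ σ, A σ) = Set.univ ∧ Pairwise (Disjoint on A)

/-- The set `𝒫` of cells `s₁ × ⋯ × s_n̄`, `s_i ∈ 𝒫_i`, of the product partition. -/
def cells {ι : Type*} {E : ι → Type*} (P : (i : ι) → Set (Set (E i))) :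
    Set (Set ((i : ι) → E i)) :=
  { s | ∃ f : (i : ι) → Set (E i), (∀ i, f i ∈ P i) ∧ s = Set.pi Set.univ f }

/-- The set `X_σ⁰` of cells `∏_{i ∈ I'} s_i`, `s_i ∈ 𝒫_i`, of the partition restricted to `I'`. -/
def cellsOn {ι : Type*} {E : ι → Type*} (P : (i : ι) → Set (Set (E i))) (I' : Set ι) :
    Set (Set ((i : I') → E i.1)) :=
  { s | ∃ f : (i : ι) → Set (E i), (∀ i, f i ∈ P i) ∧
        s = Set.pi Set.univ (fun i : I' => f i.1) }

/-- `F(𝒳',𝒰') = ⋃_{x ∈ 𝒳', u ∈ 𝒰'} F(x,u)`. -/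
def Fset {X U : Type*} (F : X → U → Set X) (A : Set X) (B : Set U) : Set X :=
  ⋃ x ∈ A, ⋃ u ∈ B, F x u

/-- `Φ_σ(s_σ,u_σ) = F̄(𝒳 ∩ π_{I_σ}⁻¹(s_σ), 𝒰 ∩ π_{J_σ}⁻¹({u_σ}))`. -/
def Phi {ι κ : Type*} (E : ι → Type*) (Fu : κ → Type*)
    (Fbar : Set ((i : ι) → E i) → Set ((j : κ) → Fu j) → Set ((i : ι) → E i))
    (Xset : Set ((i : ι) → E i)) (Uset : Set ((j : κ) → Fu j))
    (Iσ : Set ι) (Jσ : Set κ)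
    (sσ : Set ((i : Iσ) → E i.1)) (uσ : (j : Jσ) → Fu j.1) : Set ((i : ι) → E i) :=
  Fbar (Xset ∩ proj E Iσ ⁻¹' sσ) (Uset ∩ proj Fu Jσ ⁻¹' {uσ})

/-- `Out_σ = π_{I_σ}(ℝⁿ) \ 𝒳_{I_σ}`. -/
def OutOf {ι : Type*} (E : ι → Type*) (Iσ : Set ι) (Xset : Set ((i : ι) → E i)) :
    Set ((i : Iσ) → E i.1) :=
  proj E Iσ '' Set.univ \ proj E Iσ '' Xset

/-- Transition map `δ_σ` of the symbolic subsystem `S_σ`. -/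
def deltaSub {ι κ : Type*} (E : ι → Type*) (Fu : κ → Type*)
    (Fbar : Set ((i : ι) → E i) → Set ((j : κ) → Fu j) → Set ((i : ι) → E i))
    (Xset : Set ((i : ι) → E i)) (Uset : Set ((j : κ) → Fu j))
    (P : (i : ι) → Set (Set (E i))) (V : (j : κ) → Set (Fu j))
    (Iσ Icσ : Set ι) (Jσ : Set κ)
    (sσ : Set ((i : Iσ) → E i.1)) (uσ : (j : Jσ) → Fu j.1) :
    Set (Set ((i : Iσ) → E i.1)) :=
  { s' | sσ ∈ cellsOn P Iσ ∧ uσ ∈ Set.pi Set.univ (fun j : Jσ => V j.1) ∧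
      ((s' ∈ cellsOn P Iσ ∧
          (s' ∩ proj E Iσ '' Phi E Fu Fbar Xset Uset Iσ Jσ sσ uσ).Nonempty) ∨
        (s' = OutOf E Iσ Xset ∧
          (proj E Iσ '' Phi E Fu Fbar Xset Uset Iσ Jσ sσ uσ ∩ proj E Iσ '' Xset = ∅ ∨
            ¬proj E Icσ '' Phi E Fu Fbar Xset Uset Iσ Jσ sσ uσ ⊆ proj E Icσ '' Xset))) }

/-- Transition map `δ_c` of the composed abstraction `S_c`. -/
def deltaC {ι κ τ : Type*} (E : ι → Type*) (Fu : κ → Type*)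
    (Fbar : Set ((i : ι) → E i) → Set ((j : κ) → Fu j) → Set ((i : ι) → E i))
    (Xset : Set ((i : ι) → E i)) (Uset : Set ((j : κ) → Fu j))
    (P : (i : ι) → Set (Set (E i))) (V : (j : κ) → Set (Fu j))
    (Im Ic : τ → Set ι) (Jm : τ → Set κ)
    (s : Set ((i : ι) → E i)) (u : (j : κ) → Fu j) :
    Set (Set ((i : ι) → E i)) :=
  { s' | s ∈ cells P ∧ u ∈ Set.pi Set.univ V ∧
      ((s' ∈ cells P ∧ ∀ σ : τ,
          proj E (Im σ) '' s' ∈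
            deltaSub E Fu Fbar Xset Uset P V (Im σ) (Ic σ) (Jm σ)
              (proj E (Im σ) '' s) (proj Fu (Jm σ) u)) ∨
        (s' = Xsetᶜ ∧ ∃ σ : τ,
          OutOf E (Im σ) Xset ∈
            deltaSub E Fu Fbar Xset Uset P V (Im σ) (Ic σ) (Jm σ)
              (proj E (Im σ) '' s) (proj Fu (Jm σ) u))) }

/-- Safety controller for the transition map `δ` and the safe set `safe`. -/
def IsSafetyController {X U : Type*} (δ : X → U → Set X) (safe : Set X) (C : X → Set U) : Prop :=
  (∀ x, ∀ u ∈ C x, (δ x u).Nonempty) ∧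
  (∀ x, (C x).Nonempty → x ∈ safe) ∧
  (∀ x, ∀ u ∈ C x, ∀ x', x' ∈ δ x u → (C x').Nonempty)

/-- Maximal safety controller. -/
def IsMaximalSafetyController {X U : Type*} (δ : X → U → Set X) (safe : Set X)
    (Cstar : X → Set U) : Prop :=
  IsSafetyController δ safe Cstar ∧
    ∀ C, IsSafetyController δ safe C → ∀ x, C x ⊆ Cstar x

/-- Feedback refinement relation (over a common input type). -/
def IsFeedbackRefinement {Xa Xb U : Type*} (δa : Xa → U → Set Xa) (δb : Xb → U → Set Xb)
    (H : Xa → Xb) : Prop :=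
  ∀ xa : Xa,
    (∀ u, (δb (H xa) u).Nonempty → (δa xa u).Nonempty) ∧
    (∀ u, (δb (H xa) u).Nonempty → H '' δa xa u ⊆ δb (H xa) u)

/-- Concrete transition map of `S = (ℝⁿ, 𝒰, F)` (inputs restricted to `𝒰`). -/
def deltaConc {X U : Type*} (F : X → U → Set X) (Uset : Set U) (x : X) (u : U) : Set X :=
  { x' | u ∈ Uset ∧ x' ∈ F x u }

/-!
If `y ∈ F(x, u)` with `x ∈ s` leaves `𝒳`, some coordinate `y_{i₀}` leaves `𝒳_{i₀}`, and `i₀`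
lies in some block `I_σ^c`. Since `F ⊆ F̄`, `y ∈ Φ_σ(s_{I_σ}, u_{J_σ})`, so
`π_{I_σ^c}(Φ_σ)` is not contained in `𝒳_{I_σ^c}`: this is exactly the second condition
putting `Out_σ` into `δ_σ`, and one such `σ` puts `Out` into `δ_c`.
-/

section Projection

variable {ι : Type*} {E : ι → Type*}

lemma proj_image_univ_pi (I' : Set ι) {f : (i : ι) → Set (E i)} (hf : ∀ i, (f i).Nonempty) :
    proj E I' '' pi univ f = pi univ (fun i : I' => f i.1) := by
  classical
  ext g
  constructor
  · rintro ⟨x, hx, rfl⟩ i _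
    exact hx i.1 trivial
  · intro hg
    refine ⟨fun i => if h : i ∈ I' then g ⟨i, h⟩ else (hf i).some, fun i _ => ?_, ?_⟩
    · by_cases h : i ∈ I'
      · simpa [h] using hg ⟨i, h⟩ trivial
      · simpa [h] using (hf i).some_mem
    · funext i
      simp [proj, i.2]

lemma proj_notMem_image_univ_pi {X : (i : ι) → Set (E i)} {I' : Set ι} {y : (i : ι) → E i}
    {i : ι} (hi : i ∈ I') (hy : y i ∉ X i) :
    proj E I' y ∉ proj E I' '' pi univ X := by
  rintro ⟨z, hz, hzy⟩
  have hzi : z i = y i := congrFun hzy ⟨i, hi⟩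
  exact hy (hzi ▸ hz i trivial)

lemma proj_image_mem_cellsOn {P : (i : ι) → Set (Set (E i))}
    (hP : ∀ i, ∀ t ∈ P i, t.Nonempty) {s : Set ((i : ι) → E i)} (hs : s ∈ cells P)
    (I' : Set ι) : proj E I' '' s ∈ cellsOn P I' := by
  obtain ⟨f, hf, rfl⟩ := hs
  exact ⟨f, hf, proj_image_univ_pi I' fun i => hP i _ (hf i)⟩

lemma subset_univ_pi_of_mem_cells {P : (i : ι) → Set (Set (E i))} {X : (i : ι) → Set (E i)}
    (hP : ∀ i, ⋃₀ P i = X i) {s : Set ((i : ι) → E i)} (hs : s ∈ cells P) :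
    s ⊆ pi univ X := by
  obtain ⟨f, hf, rfl⟩ := hs
  exact pi_mono fun i _ => hP i ▸ subset_sUnion_of_mem (hf i)

end Projection

lemma mem_Fset_singleton {X U : Type*} {F : X → U → Set X} {A : Set X} {u : U} {y : X} :
    y ∈ Fset F A {u} ↔ ∃ x ∈ A, y ∈ F x u := by
  simp [Fset]

section Subsystem

variable {ι κ : Type*} {E : ι → Type*} {Fu : κ → Type*}
  {Fbar : Set ((i : ι) → E i) → Set ((j : κ) → Fu j) → Set ((i : ι) → E i)}
  {Xset : Set ((i : ι) → E i)} {Uset : Set ((j : κ) → Fu j)}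

lemma mem_Phi_of_mem {F : ((i : ι) → E i) → ((j : κ) → Fu j) → Set ((i : ι) → E i)}
    (hFbar : ∀ A B, Fset F A B ⊆ Fbar A B) (Iσ : Set ι) (Jσ : Set κ)
    {s : Set ((i : ι) → E i)} {x y : (i : ι) → E i} {u : (j : κ) → Fu j}
    (hxX : x ∈ Xset) (hxs : x ∈ s) (huU : u ∈ Uset) (hy : y ∈ F x u) :
    y ∈ Phi E Fu Fbar Xset Uset Iσ Jσ (proj E Iσ '' s) (proj Fu Jσ u) :=
  hFbar _ _ (mem_biUnion ⟨hxX, x, hxs, rfl⟩ (mem_biUnion ⟨huU, rfl⟩ hy))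

lemma outOf_mem_deltaSub_of_escape {P : (i : ι) → Set (Set (E i))} {V : (j : κ) → Set (Fu j)}
    {Iσ Icσ : Set ι} {Jσ : Set κ} {sσ : Set ((i : Iσ) → E i.1)} {uσ : (j : Jσ) → Fu j.1}
    (hs : sσ ∈ cellsOn P Iσ) (hu : uσ ∈ pi univ (fun j : Jσ => V j.1))
    {y : (i : ι) → E i} (hy : y ∈ Phi E Fu Fbar Xset Uset Iσ Jσ sσ uσ)
    (hyX : proj E Icσ y ∉ proj E Icσ '' Xset) :
    OutOf E Iσ Xset ∈ deltaSub E Fu Fbar Xset Uset P V Iσ Icσ Jσ sσ uσ :=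
  ⟨hs, hu, Or.inr ⟨rfl, Or.inr fun h => hyX (h ⟨y, hy, rfl⟩)⟩⟩

end Subsystem

theorem stmt16_general
    {ι κ τ : Type*}
    (nd : ι → ℕ) (pd : κ → ℕ)
    (𝒳i : (i : ι) → Set (Vec (nd i))) (𝒰j : (j : κ) → Set (Vec (pd j)))
    (F : ((i : ι) → Vec (nd i)) → ((j : κ) → Vec (pd j)) → Set ((i : ι) → Vec (nd i)))
    (Fbar : Set ((i : ι) → Vec (nd i)) → Set ((j : κ) → Vec (pd j)) →
      Set ((i : ι) → Vec (nd i)))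
    (P : (i : ι) → Set (Set (Vec (nd i)))) (V : (j : κ) → Set (Vec (pd j)))
    (Im Ic : τ → Set ι) (Jm : τ → Set κ)
    (hFbar : ∀ A B, Fset F A B ⊆ Fbar A B)
    (hP : ∀ i, IsFinPartition (P i) (𝒳i i))
    (hV : ∀ j, (V j).Finite ∧ V j ⊆ 𝒰j j)
    (hIc : IsIndexPartition Ic) :
    ∀ s ∈ cells P, ∀ u ∈ Set.pi Set.univ V,
      ¬Fset F s {u} ⊆ (Set.pi Set.univ 𝒳i) →
      (Set.pi Set.univ 𝒳i)ᶜ ∈ deltaC (fun i => Vec (nd i)) (fun j => Vec (pd j)) Fbar (Set.pi Set.univ 𝒳i) (Set.pi Set.univ 𝒰j) P V Im Ic Jm s u := by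
  intro s hs u hu hns
  obtain ⟨y, hy, hyX⟩ := not_subset.1 hns
  obtain ⟨x, hxs, hyF⟩ := mem_Fset_singleton.1 hy
  obtain ⟨i₀, hi₀⟩ : ∃ i, y i ∉ 𝒳i i := by simpa [mem_univ_pi] using hyX
  obtain ⟨σ, hσ⟩ : ∃ σ, i₀ ∈ Ic σ := mem_iUnion.1 (hIc.1 ▸ mem_univ i₀)
  have hxX : x ∈ pi univ 𝒳i := subset_univ_pi_of_mem_cells (fun i => (hP i).2.2.1) hs hxs
  have huU : u ∈ pi univ 𝒰j := pi_mono (fun j _ => (hV j).2) hu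
  refine ⟨hs, hu, Or.inr ⟨rfl, σ, outOf_mem_deltaSub_of_escape ?_ (fun j _ => hu j.1 trivial)
    (mem_Phi_of_mem hFbar (Im σ) (Jm σ) hxX hxs huU hyF) (proj_notMem_image_univ_pi hσ hi₀)⟩⟩
  exact proj_image_mem_cellsOn (fun i => (hP i).2.1) hs (Im σ)

theorem stmt16
    {ι κ τ : Type*} [Finite ι] [Finite κ] [Finite τ]
    (nd : ι → ℕ) (pd : κ → ℕ)
    (𝒳i : (i : ι) → Set (Vec (nd i))) (𝒰j : (j : κ) → Set (Vec (pd j)))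
    (F : ((i : ι) → Vec (nd i)) → ((j : κ) → Vec (pd j)) → Set ((i : ι) → Vec (nd i)))
    (Fbar : Set ((i : ι) → Vec (nd i)) → Set ((j : κ) → Vec (pd j)) →
      Set ((i : ι) → Vec (nd i)))
    (P : (i : ι) → Set (Set (Vec (nd i)))) (V : (j : κ) → Set (Vec (pd j)))
    (Im Ic : τ → Set ι) (Jm : τ → Set κ)
    (hF : ∀ x u, u ∈ Set.pi Set.univ 𝒰j → (F x u).Nonempty)
    (hFbar : ∀ A B, Fset F A B ⊆ Fbar A B)
    (hP : ∀ i, IsFinPartition (P i) (𝒳i i))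
    (hV : ∀ j, (V j).Finite ∧ V j ⊆ 𝒰j j)
    (hIc : IsIndexPartition Ic) (hIcne : ∀ σ, (Ic σ).Nonempty) (hIcIm : ∀ σ, Ic σ ⊆ Im σ)
    (hJ : IsIndexPartition Jm) (hJne : ∀ σ, (Jm σ).Nonempty) :
    ∀ s ∈ cells P, ∀ u ∈ Set.pi Set.univ V,
      ¬Fset F s {u} ⊆ (Set.pi Set.univ 𝒳i) →
      (Set.pi Set.univ 𝒳i)ᶜ ∈ deltaC (fun i => Vec (nd i)) (fun j => Vec (pd j)) Fbar (Set.pi Set.univ 𝒳i) (Set.pi Set.univ 𝒰j) P V Im Ic Jm s u :=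
  stmt16_general nd pd 𝒳i 𝒰j F Fbar P V Im Ic Jm hFbar hP hV hIc
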